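/- arXiv:2408.11921 — 3 statements merged into one kernel-verified Lean document; each statement's English description precedes it below -/
import Mathlib

section
/- Let K : ℝ → ℝ be C¹, even, with K'(z) < 0 for 0 < z < R and K'(z) = 0 for |z| ≥ R. For real numbers c₁, c₂ with sgn c₁ ≠ sgn c₂ and radii r₁, r₂ > 0, define I(τ) = ∫_{-r₁}^{r₁} ∫_{-r₂}^{r₂} K(x - y + (c₁ - c₂) + τ(sgn c₂ - sgn c₁)) dy dx. Then the right derivative of I at τ = 0 is nonnegative. -/
open MeasureTheory intervalIntegral

/-- An even function antitone on `[0,∞)` is antitone in `|·|`. -/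
lemma even_anti_abs {f : ℝ → ℝ} (hf : ∀ z, f (-z) = f z)
    (ha : AntitoneOn f (Set.Ici 0)) {u v : ℝ} (h : |u| ≤ |v|) : f v ≤ f u := by
  have hu : f |u| = f u := by
    rcases abs_choice u with h' | h' <;> rw [h']
    exact hf u
  have hv : f |v| = f v := by
    rcases abs_choice v with h' | h' <;> rw [h']
    exact hf v
  rw [← hu, ← hv]
  exact ha (abs_nonneg u) (le_trans (abs_nonneg u) h) h

lemma sign_lt_imp {x y : ℝ} (h : Real.sign x < Real.sign y) : x < y := by
  rcases lt_trichotomy x 0 with hx | hx | hx <;>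
    rcases lt_trichotomy y 0 with hy | hy | hy <;>
    simp [Real.sign_of_neg, Real.sign_of_pos, hx, hy, Real.sign_zero] at h ⊢ <;>
    linarith

/-- For an even C¹ kernel `K` with `K' < 0` on `(0, R)` and `K' = 0`
outside `[-R, R]`, and intervals centred at `c₁, c₂` with opposite signs moving at
unit speed towards the origin, the right derivative at `τ = 0` of the interaction
energy `I` is nonnegative. -/
theorem steiner_interaction_right_deriv_nonneg
    (K : ℝ → ℝ) (R : ℝ) (hR : 0 < R)
    (hK : ContDiff ℝ 1 K) (hKeven : ∀ z, K (-z) = K z)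
    (hK'neg : ∀ z, 0 < z → z < R → deriv K z < 0)
    (hK'zero : ∀ z : ℝ, R ≤ |z| → deriv K z = 0)
    (c₁ c₂ r₁ r₂ : ℝ) (hsgn : Real.sign c₁ ≠ Real.sign c₂)
    (hr₁ : 0 < r₁) (hr₂ : 0 < r₂)
    (I : ℝ → ℝ)
    (hI : ∀ τ, I τ = ∫ x in (-r₁)..r₁, ∫ y in (-r₂)..r₂,
        K (x - y + (c₁ - c₂) + τ * (Real.sign c₂ - Real.sign c₁))) :
    0 ≤ derivWithin I (Set.Ici 0) 0 := by
  set a : ℝ := c₁ - c₂ with ha_def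
  set s : ℝ := Real.sign c₂ - Real.sign c₁ with hs_def
  have hKcont : Continuous K := hK.continuous
  -- K is antitone on [0, ∞)
  have hK'nonpos : ∀ z : ℝ, 0 < z → deriv K z ≤ 0 := by
    intro z hz
    rcases lt_or_ge z R with h | h
    · exact (hK'neg z hz h).le
    · exact le_of_eq (hK'zero z (by rwa [abs_of_pos hz]))
  have hKanti : AntitoneOn K (Set.Ici 0) := by
    apply antitoneOn_of_deriv_nonpos (convex_Ici 0) hKcont.continuousOn
    · intro x _
      exact ((hK.differentiable one_ne_zero) x).differentiableWithinAt
    · intro x hx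
      rw [interior_Ici] at hx
      exact hK'nonpos x hx
  -- primitive of K
  set Φ : ℝ → ℝ := fun t => ∫ z in (0:ℝ)..t, K z with hΦ_def
  have hΦderiv : ∀ t, HasDerivAt Φ (K t) t := by
    intro t
    exact intervalIntegral.integral_hasDerivAt_right
      (hKcont.intervalIntegrable 0 t)
      hKcont.aestronglyMeasurable.stronglyMeasurableAtFilter
      hKcont.continuousAt
  set G : ℝ → ℝ := fun u => Φ (u + r₂) - Φ (u - r₂) with hG_def
  have hGderiv : ∀ u, HasDerivAt G (K (u + r₂) - K (u - r₂)) u := by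
    intro u
    have h1 : HasDerivAt (fun u : ℝ => Φ (u + r₂)) (K (u + r₂)) u := by
      simpa [Function.comp_def] using (hΦderiv (u + r₂)).comp u ((hasDerivAt_id u).add_const r₂)
    have h2 : HasDerivAt (fun u : ℝ => Φ (u - r₂)) (K (u - r₂)) u := by
      simpa [Function.comp_def] using (hΦderiv (u - r₂)).comp u ((hasDerivAt_id u).sub_const r₂)
    exact h1.sub h2
  have hGcont : Continuous G := by
    rw [continuous_iff_continuousAt]
    exact fun u => (hGderiv u).continuousAt
  have hGval : ∀ u, G u = ∫ z in (u - r₂)..(u + r₂), K z := by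
    intro u
    show Φ (u + r₂) - Φ (u - r₂) = _
    simp only [hΦ_def]
    exact (intervalIntegral.integral_interval_sub_left (μ := volume)
      (hKcont.intervalIntegrable 0 (u + r₂)) (hKcont.intervalIntegrable 0 (u - r₂)))
  have hGeven : ∀ u, G (-u) = G u := by
    intro u
    rw [hGval, hGval,
      show (-u - r₂ : ℝ) = -(u + r₂) by ring, show (-u + r₂ : ℝ) = -(u - r₂) by ring,
      ← intervalIntegral.integral_comp_neg]
    simp_rw [hKeven]
  have hGanti : AntitoneOn G (Set.Ici 0) := by
    apply antitoneOn_of_deriv_nonpos (convex_Ici 0) hGcont.continuousOn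
    · intro x _
      exact (hGderiv x).differentiableAt.differentiableWithinAt
    · intro x hx
      rw [interior_Ici] at hx
      have hx' : (0:ℝ) < x := hx
      rw [(hGderiv x).deriv]
      have h1 : |x - r₂| ≤ |x + r₂| :=
        abs_le_abs (by linarith) (by linarith)
      have := even_anti_abs hKeven hKanti h1
      linarith
  -- primitive of G
  set Ψ : ℝ → ℝ := fun t => ∫ z in (0:ℝ)..t, G z with hΨ_def
  have hΨderiv : ∀ t, HasDerivAt Ψ (G t) t := by
    intro t
    exact intervalIntegral.integral_hasDerivAt_right
      (hGcont.intervalIntegrable 0 t)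
      hGcont.aestronglyMeasurable.stronglyMeasurableAtFilter
      hGcont.continuousAt
  set F : ℝ → ℝ := fun t => Ψ (t + r₁) - Ψ (t - r₁) with hF_def
  have hFderiv : ∀ t, HasDerivAt F (G (t + r₁) - G (t - r₁)) t := by
    intro t
    have h1 : HasDerivAt (fun t : ℝ => Ψ (t + r₁)) (G (t + r₁)) t := by
      simpa [Function.comp_def] using (hΨderiv (t + r₁)).comp t ((hasDerivAt_id t).add_const r₁)
    have h2 : HasDerivAt (fun t : ℝ => Ψ (t - r₁)) (G (t - r₁)) t := by
      simpa [Function.comp_def] using (hΨderiv (t - r₁)).comp t ((hasDerivAt_id t).sub_const r₁)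
    exact h1.sub h2
  have hFval : ∀ t, F t = ∫ x in (t - r₁)..(t + r₁), G x := by
    intro t
    show Ψ (t + r₁) - Ψ (t - r₁) = _
    simp only [hΨ_def]
    exact (intervalIntegral.integral_interval_sub_left (μ := volume)
      (hGcont.intervalIntegrable 0 (t + r₁)) (hGcont.intervalIntegrable 0 (t - r₁)))
  -- rewrite I in terms of F
  have hIF : I = fun τ => F (a + τ * s) := by
    funext τ
    rw [hI τ, hFval]
    have hinner : ∀ x : ℝ, (∫ y in (-r₂)..r₂, K (x - y + a + τ * s))
        = G (x + (a + τ * s)) := by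
      intro x
      have : (fun y => K (x - y + a + τ * s))
          = fun y => K ((x + (a + τ * s)) - y) := by
        funext y; ring_nf
      rw [this, intervalIntegral.integral_comp_sub_left K (x + (a + τ * s)), hGval]
      congr 1 <;> ring
    simp_rw [hinner]
    rw [intervalIntegral.integral_comp_add_right G (a + τ * s)]
    congr 1 <;> ring
  -- derivative of I at 0
  have hIderiv : HasDerivAt I ((G (a + r₁) - G (a - r₁)) * s) 0 := by
    rw [hIF]
    have haff : HasDerivAt (fun τ : ℝ => a + τ * s) s 0 := by
      simpa using ((hasDerivAt_id (0:ℝ)).mul_const s).const_add a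
    have := (hFderiv (a + 0 * s)).comp 0 haff
    simpa [Function.comp_def] using this
  rw [hIderiv.hasDerivWithinAt.derivWithin (uniqueDiffOn_Ici 0 0 Set.self_mem_Ici)]
  -- sign analysis
  rcases lt_trichotomy s 0 with hs | hs | hs
  · -- s < 0 : sign c₂ < sign c₁, so c₂ < c₁, a > 0
    have hc : c₂ < c₁ := sign_lt_imp (by rw [hs_def] at hs; linarith)
    have ha : 0 < a := by rw [ha_def]; linarith
    have habs : |a - r₁| ≤ |a + r₁| :=
      abs_le_abs (by linarith) (by linarith)
    have := even_anti_abs hGeven hGanti habs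
    nlinarith
  · exact absurd (by rw [hs_def] at hs; linarith : Real.sign c₁ = Real.sign c₂) hsgn
  · -- s > 0 : sign c₁ < sign c₂, so c₁ < c₂, a < 0
    have hc : c₁ < c₂ := sign_lt_imp (by rw [hs_def] at hs; linarith)
    have ha : a < 0 := by rw [ha_def]; linarith
    have habs : |a + r₁| ≤ |a - r₁| := by
      rw [abs_sub_comm a r₁]
      exact abs_le_abs (by linarith) (by linarith)
    have := even_anti_abs hGeven hGanti habs
    exact mul_nonneg (by linarith) hs.le
end

section
/- Let m > 2, ε > 0, and let W ∈ L¹(ℝ^d) satisfy W ≤ 0. Suppose ρ ∈ L¹₊(ℝ^d) ∩ L^∞(ℝ^d) ∩ C(ℝ^d) is compactly supported and satisfies, on each connected component D_j of its support, (m ε/(m-1)) ρ(x)^{m-1} + (W * ρ)(x) = C_j for all x ∈ D_j (with ρ = 0 on ∂D_j). Then ‖ρ‖_{L^∞(ℝ^d)} ≤ ((m-1)/(m ε) · ‖W‖_{L¹(ℝ^d)})^{1/(m-2)}. -/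
open MeasureTheory

/-- Mass-independent upper bound for stationary states. If a
continuous, compactly supported, nonnegative density `ρ` satisfies, on each
connected component of its support, the stationarity identity
`(mε/(m-1)) ρ^{m-1} + W * ρ = const` (with `ρ = 0` on the component boundary),
where `W ∈ L¹` and `W ≤ 0`, then `ρ ≤ ((m-1)/(mε) ‖W‖_{L¹})^{1/(m-2)}`. -/
theorem stationary_state_mass_independent_bound
    (d : ℕ) (hd : 0 < d)
    (m ε : ℝ) (hm : 2 < m) (hε : 0 < ε)
    (W : EuclideanSpace ℝ (Fin d) → ℝ)
    (hW_int : Integrable W) (hW_nonpos : ∀ x, W x ≤ 0)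
    (ρ : EuclideanSpace ℝ (Fin d) → ℝ)
    (hρ_cont : Continuous ρ) (hρ_nonneg : ∀ x, 0 ≤ ρ x)
    (hρ_int : Integrable ρ) (hρ_cs : HasCompactSupport ρ)
    (hstat : ∀ z ∈ tsupport ρ, ∃ Cj : ℝ,
      (∀ x ∈ connectedComponentIn (tsupport ρ) z,
        m * ε / (m - 1) * ρ x ^ (m - 1) + (∫ y, W (x - y) * ρ y) = Cj) ∧
      (∀ x ∈ frontier (connectedComponentIn (tsupport ρ) z), ρ x = 0)) :
    ∀ x, ρ x ≤ ((m - 1) / (m * ε) * ∫ y, |W y|) ^ ((1 : ℝ) / (m - 2)) := by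
  have hm1 : (0:ℝ) < m - 1 := by linarith
  have hm2 : (0:ℝ) < m - 2 := by linarith
  have hWabs : (0:ℝ) ≤ ∫ y, |W y| := integral_nonneg fun y => abs_nonneg _
  set K : ℝ := (m - 1) / (m * ε) * ∫ y, |W y| with hKdef
  have hKnn : 0 ≤ K := by positivity
  -- maximum point
  obtain ⟨x₀, hx₀⟩ : ∃ x₀, ∀ x, ρ x ≤ ρ x₀ :=
    hρ_cont.exists_forall_ge_of_hasCompactSupport hρ_cs
  intro x
  have hle : ρ x ≤ ρ x₀ := hx₀ x
  rcases eq_or_lt_of_le (hρ_nonneg x₀) with h0 | hMpos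
  · exact le_trans hle (by rw [← h0]; exact Real.rpow_nonneg hKnn _)
  -- x₀ is in the support
  have hx₀mem : x₀ ∈ tsupport ρ :=
    subset_tsupport ρ (by simp [Function.mem_support]; exact ne_of_gt hMpos)
  obtain ⟨Cj, h1, h2⟩ := hstat x₀ hx₀mem
  set D : Set (EuclideanSpace ℝ (Fin d)) := connectedComponentIn (tsupport ρ) x₀ with hDdef
  have hx₀D : x₀ ∈ D := mem_connectedComponentIn hx₀mem
  have hDsub : D ⊆ tsupport ρ := connectedComponentIn_subset _ _
  -- D is closed
  have hDclosed : IsClosed D := by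
    refine isClosed_of_closure_subset ?_
    exact IsPreconnected.subset_connectedComponentIn
      isPreconnected_connectedComponentIn.closure (subset_closure hx₀D)
      ((isClosed_tsupport ρ).closure_subset_iff.mpr hDsub)
  -- D is not the whole space
  haveI : Nontrivial (EuclideanSpace ℝ (Fin d)) := by
    have : 0 < Module.finrank ℝ (EuclideanSpace ℝ (Fin d)) := by
      simpa [finrank_euclideanSpace_fin] using hd
    exact Module.nontrivial_of_finrank_pos (R := ℝ) this
  have hDne_univ : D ≠ Set.univ := by
    intro h
    have : IsCompact (Set.univ : Set (EuclideanSpace ℝ (Fin d))) :=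
      hρ_cs.of_isClosed_subset isClosed_univ (h ▸ hDsub)
    exact NoncompactSpace.noncompact_univ this
  -- boundary point
  obtain ⟨z, hz⟩ : (frontier D).Nonempty :=
    nonempty_frontier_iff.mpr ⟨⟨x₀, hx₀D⟩, hDne_univ⟩
  have hzD : z ∈ D := hDclosed.frontier_subset hz
  -- the constant is nonpositive
  have hρz : ρ z = 0 := h2 z hz
  have hCj : Cj ≤ 0 := by
    have hid := h1 z hzD
    rw [hρz, Real.zero_rpow (ne_of_gt hm1), mul_zero, zero_add] at hid
    rw [← hid]
    exact integral_nonpos fun y => mul_nonpos_of_nonpos_of_nonneg (hW_nonpos _) (hρ_nonneg _)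
  -- evaluate at the maximum point
  have key := h1 x₀ hx₀D
  set M : ℝ := ρ x₀ with hMdef
  set I : ℝ := ∫ y, W (x₀ - y) * ρ y with hIdef
  -- bound on -I
  have hWt : Integrable (fun y => W (x₀ - y)) := hW_int.comp_sub_left x₀
  have hg : Integrable (fun y => |W (x₀ - y)| * M) := hWt.abs.mul_const M
  have hIb : -I ≤ (∫ y, |W y|) * M := by
    have h₁ : -I ≤ |I| := neg_le_abs I
    have h₂ : |I| ≤ ∫ y, |W (x₀ - y)| * |ρ y| := by
      simpa [abs_mul] using
        norm_integral_le_integral_norm (μ := volume) (fun y => W (x₀ - y) * ρ y)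
    have h₃ : (∫ y, |W (x₀ - y)| * |ρ y|) ≤ ∫ y, |W (x₀ - y)| * M := by
      refine integral_mono_of_nonneg
        (Filter.Eventually.of_forall fun y => by positivity) hg
        (Filter.Eventually.of_forall fun y => ?_)
      dsimp only
      rw [abs_of_nonneg (hρ_nonneg y)]
      exact mul_le_mul_of_nonneg_left (hx₀ y) (abs_nonneg _)
    have h₄ : (∫ y, |W (x₀ - y)| * M) = (∫ y, |W y|) * M := by
      rw [integral_mul_const, integral_sub_left_eq_self (fun y => |W y|) volume x₀]
    linarith
  -- main inequality
  have hMl : m * ε / (m - 1) * M ^ (m - 1) ≤ (∫ y, |W y|) * M := by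
    have : m * ε / (m - 1) * M ^ (m - 1) = Cj - I := by linarith [key]
    linarith
  -- algebra
  have hpow : M ^ (m - 1) = M ^ (m - 2) * M := by
    rw [show m - 1 = (m - 2) + 1 by ring, Real.rpow_add hMpos, Real.rpow_one]
  have h3 : m * ε / (m - 1) * M ^ (m - 2) ≤ ∫ y, |W y| := by
    have h' : (m * ε / (m - 1) * M ^ (m - 2)) * M ≤ (∫ y, |W y|) * M := by
      calc (m * ε / (m - 1) * M ^ (m - 2)) * M = m * ε / (m - 1) * M ^ (m - 1) := by
            rw [hpow]; ring
        _ ≤ (∫ y, |W y|) * M := hMl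
    exact le_of_mul_le_mul_right h' hMpos
  have h4 : M ^ (m - 2) ≤ K := by
    rw [hKdef]
    have hmul : (0:ℝ) < m * ε / (m - 1) := by positivity
    rw [div_mul_eq_mul_div, le_div_iff₀ (by positivity : (0:ℝ) < m * ε)]
    calc M ^ (m - 2) * (m * ε) = (m - 1) * (m * ε / (m - 1) * M ^ (m - 2)) := by
          field_simp
      _ ≤ (m - 1) * ∫ y, |W y| := mul_le_mul_of_nonneg_left h3 (le_of_lt hm1)
  -- conclude via rpow monotonicity
  have hfin : M ≤ K ^ ((1:ℝ) / (m - 2)) := by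
    have h5 : (M ^ (m - 2)) ^ ((1:ℝ) / (m - 2)) ≤ K ^ ((1:ℝ) / (m - 2)) :=
      Real.rpow_le_rpow (Real.rpow_nonneg (le_of_lt hMpos) _) h4 (by positivity)
    rwa [← Real.rpow_mul (le_of_lt hMpos), mul_one_div, div_self (ne_of_gt hm2),
      Real.rpow_one] at h5
  exact le_trans hle hfin
end

section
/- Let Q = [c₁ - r₁, c₁ + r₁] × [c₂ - r₂, c₂ + r₂] ⊂ ℝ² be a rectangle with center (c₁, c₂) satisfying c₂ > c₁, and let R > 0. Define Q⁻ = Q ∩ {(x,y) : 0 < x - y < R} and Q⁺ = Q ∩ {(x,y) : -R < x - y < 0}. Then the Lebesgue measure of Q⁺ is at least that of Q⁻: |Q⁺| ≥ |Q⁻|. -/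
open MeasureTheory

/-- For a rectangle `Q` in `ℝ²` whose centre `(c₁, c₂)` lies
above the diagonal (`c₂ > c₁`), the part of `Q` within distance band
`-R < x - y < 0` has Lebesgue measure at least that of the part within
`0 < x - y < R`. -/
theorem rectangle_band_measure_comparison
    (c₁ c₂ r₁ r₂ R : ℝ) (hc : c₁ < c₂) (hR : 0 < R) :
    volume ((Set.Icc (c₁ - r₁) (c₁ + r₁) ×ˢ Set.Icc (c₂ - r₂) (c₂ + r₂)) ∩
        {p : ℝ × ℝ | 0 < p.1 - p.2 ∧ p.1 - p.2 < R}) ≤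
      volume ((Set.Icc (c₁ - r₁) (c₁ + r₁) ×ˢ Set.Icc (c₂ - r₂) (c₂ + r₂)) ∩
        {p : ℝ × ℝ | -R < p.1 - p.2 ∧ p.1 - p.2 < 0}) := by
  set I : Set ℝ := Set.Icc (c₁ - r₁) (c₁ + r₁) with hI
  set J : Set ℝ := Set.Icc (c₂ - r₂) (c₂ + r₂) with hJ
  -- shear map (x,y) ↦ (x - y, y)
  set S : ℝ × ℝ → ℝ × ℝ := fun z => (z.1 - z.2, z.2) with hSdef
  have hS : MeasurePreserving S volume volume := by
    rw [show (volume : Measure (ℝ × ℝ)) = (volume : Measure ℝ).prod volume from rfl]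
    exact measurePreserving_sub_prod volume volume
  -- flip map (h,y) ↦ (-h, y)
  set N : ℝ × ℝ → ℝ × ℝ := fun z => (-z.1, z.2) with hNdef
  have hN : MeasurePreserving N volume volume := by
    rw [show (volume : Measure (ℝ × ℝ)) = (volume : Measure ℝ).prod volume from rfl]
    exact (Measure.measurePreserving_neg volume).prod (MeasurePreserving.id volume)
  set A : Set (ℝ × ℝ) :=
    {q : ℝ × ℝ | (0 < q.1 ∧ q.1 < R) ∧ q.2 + q.1 ∈ I ∧ q.2 ∈ J} with hA
  set B : Set (ℝ × ℝ) :=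
    {q : ℝ × ℝ | (-R < q.1 ∧ q.1 < 0) ∧ q.2 + q.1 ∈ I ∧ q.2 ∈ J} with hB
  set C : Set (ℝ × ℝ) :=
    {q : ℝ × ℝ | (0 < q.1 ∧ q.1 < R) ∧ q.2 - q.1 ∈ I ∧ q.2 ∈ J} with hC
  have hAm : MeasurableSet A := by
    have : A = ((Set.Ioo 0 R) ×ˢ J) ∩ ((fun q : ℝ × ℝ => q.2 + q.1) ⁻¹' I) := by
      ext q; simp [hA, Set.mem_prod, and_comm, and_assoc]; tauto
    rw [this]
    exact (measurableSet_Ioo.prod measurableSet_Icc).inter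
      ((measurable_snd.add measurable_fst) measurableSet_Icc)
  have hBm : MeasurableSet B := by
    have : B = ((Set.Ioo (-R) 0) ×ˢ J) ∩ ((fun q : ℝ × ℝ => q.2 + q.1) ⁻¹' I) := by
      ext q; simp [hB, Set.mem_prod, and_comm, and_assoc]; tauto
    rw [this]
    exact (measurableSet_Ioo.prod measurableSet_Icc).inter
      ((measurable_snd.add measurable_fst) measurableSet_Icc)
  have hCm : MeasurableSet C := by
    have : C = ((Set.Ioo 0 R) ×ˢ J) ∩ ((fun q : ℝ × ℝ => q.2 - q.1) ⁻¹' I) := by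
      ext q; simp [hC, Set.mem_prod, and_comm, and_assoc]; tauto
    rw [this]
    exact (measurableSet_Ioo.prod measurableSet_Icc).inter
      ((measurable_snd.sub measurable_fst) measurableSet_Icc)
  -- identify the two sets as shear preimages
  have hQminus : (I ×ˢ J) ∩ {p : ℝ × ℝ | 0 < p.1 - p.2 ∧ p.1 - p.2 < R} = S ⁻¹' A := by
    ext p
    simp only [Set.mem_inter_iff, Set.mem_prod, Set.mem_setOf_eq, Set.mem_preimage, hSdef, hA]
    constructor
    · rintro ⟨⟨h1, h2⟩, h3, h4⟩
      exact ⟨⟨h3, h4⟩, by simpa using h1, h2⟩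
    · rintro ⟨⟨h3, h4⟩, h1, h2⟩
      exact ⟨⟨by simpa using h1, h2⟩, h3, h4⟩
  have hQplus : (I ×ˢ J) ∩ {p : ℝ × ℝ | -R < p.1 - p.2 ∧ p.1 - p.2 < 0} = S ⁻¹' B := by
    ext p
    simp only [Set.mem_inter_iff, Set.mem_prod, Set.mem_setOf_eq, Set.mem_preimage, hSdef, hB]
    constructor
    · rintro ⟨⟨h1, h2⟩, h3, h4⟩
      exact ⟨⟨h3, h4⟩, by simpa using h1, h2⟩
    · rintro ⟨⟨h3, h4⟩, h1, h2⟩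
      exact ⟨⟨by simpa using h1, h2⟩, h3, h4⟩
  have hNB : N ⁻¹' B = C := by
    ext q
    simp only [Set.mem_preimage, hNdef, hB, hC, Set.mem_setOf_eq]
    constructor
    · rintro ⟨⟨h1, h2⟩, h3, h4⟩
      exact ⟨⟨by linarith, by linarith⟩, by simpa [sub_eq_add_neg] using h3, h4⟩
    · rintro ⟨⟨h1, h2⟩, h3, h4⟩
      exact ⟨⟨by linarith, by linarith⟩, by simpa [sub_eq_add_neg] using h3, h4⟩
  rw [hQminus, hQplus, hS.measure_preimage hAm.nullMeasurableSet,
    hS.measure_preimage hBm.nullMeasurableSet,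
    ← hN.measure_preimage hBm.nullMeasurableSet, hNB]
  -- Fubini: slice in the first coordinate h
  rw [show (volume : Measure (ℝ × ℝ)) = (volume : Measure ℝ).prod volume from rfl,
    Measure.prod_apply hAm, Measure.prod_apply hCm]
  refine lintegral_mono fun h => ?_
  by_cases hh : 0 < h ∧ h < R
  · have hsA : Prod.mk h ⁻¹' A = Set.Icc (c₁ - r₁ - h) (c₁ + r₁ - h) ∩ J := by
      ext y
      simp only [Set.mem_preimage, hA, Set.mem_setOf_eq, Set.mem_inter_iff, hI,
        Set.mem_Icc]
      constructor
      · rintro ⟨_, ⟨h3, h4⟩, h5⟩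
        exact ⟨⟨by linarith, by linarith⟩, h5⟩
      · rintro ⟨⟨h3, h4⟩, h5⟩
        exact ⟨hh, ⟨by linarith, by linarith⟩, h5⟩
    have hsC : Prod.mk h ⁻¹' C = Set.Icc (c₁ - r₁ + h) (c₁ + r₁ + h) ∩ J := by
      ext y
      simp only [Set.mem_preimage, hC, Set.mem_setOf_eq, Set.mem_inter_iff, hI,
        Set.mem_Icc]
      constructor
      · rintro ⟨_, ⟨h3, h4⟩, h5⟩
        exact ⟨⟨by linarith, by linarith⟩, h5⟩
      · rintro ⟨⟨h3, h4⟩, h5⟩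
        exact ⟨hh, ⟨by linarith, by linarith⟩, h5⟩
    rw [hsA, hsC, hJ, Set.Icc_inter_Icc, Set.Icc_inter_Icc, Real.volume_Icc,
      Real.volume_Icc]
    apply ENNReal.ofReal_le_ofReal
    obtain ⟨hh1, hh2⟩ := hh
    simp only [min_def, max_def]
    split_ifs <;> linarith
  · have : Prod.mk h ⁻¹' A = ∅ := by
      ext y
      simp only [Set.mem_preimage, hA, Set.mem_setOf_eq, Set.mem_empty_iff_false,
        iff_false]
      rintro ⟨h1, _⟩
      exact hh h1
    simp [this]
end
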